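/- arXiv:math/0407252 — 3 statements merged into one kernel-verified Lean document; each statement's English description precedes it below -/
import Mathlib

section
/- For f, g in L²(0,1), the n-th cosine Fourier coefficients satisfy c_n(f)·c_n(g) = c_n(h₁), where h₁ = (1/2){R(Rf∗g + f∗Rg) + f∗g + Rf∗Rg}, R is the reflection (Rf)(x)=f(1-x), and (f∗g)(x)=∫₀ˣ f(x-t)g(t)dt. -/
open MeasureTheory Real

/-- The measure of the unit interval `(0,1]` used to model `L²(0,1)`. -/
noncomputable def mu01 : Measure ℝ := volume.restrict (Set.Ioc (0:ℝ) 1)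

/-- `n`-th cosine Fourier coefficient `c_n(f) = ∫₀¹ f(x) cos(πnx) dx`. -/
noncomputable def cosCoef (f : ℝ → ℂ) (n : ℕ) : ℂ :=
  ∫ x in (0:ℝ)..1, f x * Complex.cos (Real.pi * n * x)

/-- Reflection about `x = 1/2`: `(Rf)(x) = f(1-x)`. -/
def Rref (f : ℝ → ℂ) : ℝ → ℂ := fun x => f (1 - x)

/-- Convolution `(f ∗ g)(x) = ∫₀ˣ f(x-t) g(t) dt`. -/
noncomputable def conv01 (f g : ℝ → ℂ) : ℝ → ℂ :=
  fun x => ∫ t in (0:ℝ)..x, f (x - t) * g t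

/-!
Extend `f` and `g` by zero outside `(0,1)`. By Fubini and the shear `(s,t) ↦ (s+t,t)`, the
cosine coefficient of each of the four convolutions in `h₁` becomes a double integral
`∬ f(s) g(t) K(s,t)` over the unit square: `K = cos πn(s+t)` on `s+t<1` for `f∗g`,
`cos πn(2-s-t)` on `s+t>1` for `Rf∗Rg`, and `cos πn(s-t)` on `s>t`, resp. on `s<t`, for
`R(Rf∗g)`, resp. `R(f∗Rg)`. Off the two diagonals these four kernels add up to
`cos πn(s+t) + cos πn(s-t) = 2 cos πns · cos πnt`, whose double integral is `2 c_n(f) c_n(g)`.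
-/

open Set

/-- Extension by zero outside the *open* interval, so that it commutes with `Rref`. -/
noncomputable def zeroExt (u : ℝ → ℂ) : ℝ → ℂ := (Ioo 0 1).indicator u

lemma zeroExt_apply_of_mem {u : ℝ → ℂ} {x : ℝ} (hx : x ∈ Ioo 0 1) : zeroExt u x = u x :=
  indicator_of_mem hx u

lemma zeroExt_apply_of_notMem {u : ℝ → ℂ} {x : ℝ} (hx : x ∉ Ioo 0 1) : zeroExt u x = 0 :=
  indicator_of_notMem hx u

lemma zeroExt_Rref (u : ℝ → ℂ) : zeroExt (Rref u) = Rref (zeroExt u) := by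
  ext x
  simp only [zeroExt, Rref, indicator_apply, ← Ioo.mem_iff_one_sub_mem]

lemma intervalIntegral_eq_integral_zeroExt (u : ℝ → ℂ) :
    ∫ x in (0:ℝ)..1, u x = ∫ x, zeroExt u x := by
  rw [intervalIntegral.integral_of_le zero_le_one, integral_Ioc_eq_integral_Ioo, zeroExt,
    integral_indicator measurableSet_Ioo]

lemma intervalIntegrable_iff_integrable_zeroExt {u : ℝ → ℂ} :
    IntervalIntegrable u volume 0 1 ↔ Integrable (zeroExt u) := by
  rw [intervalIntegrable_iff_integrableOn_Ioo_of_le zero_le_one, zeroExt,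
    integrable_indicator_iff measurableSet_Ioo]

lemma integrable_zeroExt_of_memLp {f : ℝ → ℂ} (hf : MemLp f 2 mu01) :
    Integrable (zeroExt f) := by
  have : IsFiniteMeasure mu01 := isFiniteMeasure_restrict.2 (by simp)
  rw [zeroExt, integrable_indicator_iff measurableSet_Ioo]
  exact IntegrableOn.mono_set (hf.integrable one_le_two) Ioo_subset_Ioc_self

lemma integrable_zeroExt_Rref {u : ℝ → ℂ} (hu : Integrable (zeroExt u)) :
    Integrable (zeroExt (Rref u)) := by
  rw [zeroExt_Rref]
  exact hu.comp_sub_left 1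

lemma Continuous.exists_norm_zeroExt_le {k : ℝ → ℂ} (hk : Continuous k) :
    ∃ C, ∀ x, ‖zeroExt k x‖ ≤ C := by
  obtain ⟨C, hC⟩ := isCompact_Icc.exists_bound_of_continuousOn (hk.continuousOn (s := Icc 0 1))
  refine ⟨C, fun x => ?_⟩
  by_cases hx : x ∈ Ioo 0 1
  · rw [zeroExt_apply_of_mem hx]
    exact hC x (Ioo_subset_Icc_self hx)
  · rw [zeroExt_apply_of_notMem hx, norm_zero]
    exact (norm_nonneg _).trans (hC 0 (by simp))

lemma integrable_zeroExt_mul_zeroExt_mul_comp {u v k : ℝ → ℂ} (hu : Integrable (zeroExt u))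
    (hv : Integrable (zeroExt v)) (hk : Continuous k) {L : ℝ × ℝ → ℝ} (hL : Measurable L) :
    Integrable (fun p : ℝ × ℝ => zeroExt u p.1 * zeroExt v p.2 * zeroExt k (L p)) := by
  obtain ⟨C, hC⟩ := hk.exists_norm_zeroExt_le
  refine (hu.mul_prod hv).mul_bdd ?_ (Filter.Eventually.of_forall fun p => hC (L p))
  exact ((hk.measurable.indicator measurableSet_Ioo).comp hL).aestronglyMeasurable

lemma Rref_add (u v : ℝ → ℂ) : Rref (fun x => u x + v x) = fun x => Rref u x + Rref v x := rfl

lemma Continuous.Rref {k : ℝ → ℂ} (hk : Continuous k) : Continuous (Rref k) :=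
  hk.comp (by fun_prop)

lemma intervalIntegrable_Rref {F : ℝ → ℂ} (hF : IntervalIntegrable F volume 0 1) :
    IntervalIntegrable (Rref F) volume 0 1 := by
  rw [intervalIntegrable_iff_integrable_zeroExt] at hF ⊢
  exact integrable_zeroExt_Rref hF

lemma intervalIntegral_Rref_mul (u k : ℝ → ℂ) :
    ∫ x in (0:ℝ)..1, Rref u x * k x = ∫ x in (0:ℝ)..1, u x * Rref k x := by
  have := intervalIntegral.integral_comp_sub_left (a := 0) (b := 1) (fun x => u x * Rref k x) 1
  simpa only [Rref, sub_sub_cancel, sub_zero, sub_self] using this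

lemma integral_comp_one_sub_fst (F : ℝ × ℝ → ℂ) :
    ∫ p : ℝ × ℝ, F (1 - p.1, p.2) = ∫ p, F p :=
  ((Measure.measurePreserving_sub_left volume 1).prod (MeasurePreserving.id volume)).integral_comp'
    (f := (MeasurableEquiv.subLeft (1:ℝ)).prodCongr (MeasurableEquiv.refl ℝ)) F

lemma integral_comp_one_sub_snd (F : ℝ × ℝ → ℂ) :
    ∫ p : ℝ × ℝ, F (p.1, 1 - p.2) = ∫ p, F p :=
  ((MeasurePreserving.id volume).prod (Measure.measurePreserving_sub_left volume 1)).integral_comp'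
    (f := (MeasurableEquiv.refl ℝ).prodCongr (MeasurableEquiv.subLeft (1:ℝ))) F

lemma conv01_eq_integral_zeroExt (u v : ℝ → ℂ) {x : ℝ} (hx : x ∈ Ioc 0 1) :
    conv01 u v x = ∫ t, zeroExt u (x - t) * zeroExt v t := by
  have h_supp : ∀ t ∉ Ioc 0 x, zeroExt u (x - t) * zeroExt v t = 0 := by
    intro t ht
    rcases not_and_or.1 ht with ht | ht
    · rw [zeroExt_apply_of_notMem (fun h => ht h.1), mul_zero]
    · rw [zeroExt_apply_of_notMem (fun h => by linarith [h.1]), zero_mul]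
  rw [conv01, intervalIntegral.integral_of_le hx.1.le,
    ← setIntegral_eq_integral_of_forall_compl_eq_zero h_supp]
  refine setIntegral_congr_ae measurableSet_Ioc ?_
  filter_upwards [Measure.ae_ne volume x] with t hne ht
  have hlt : t < x := lt_of_le_of_ne ht.2 hne
  rw [zeroExt_apply_of_mem ⟨by linarith, by linarith [ht.1, hx.2]⟩,
    zeroExt_apply_of_mem ⟨ht.1, by linarith [hx.2]⟩]

lemma integral_zeroExt_conv_kernel (u v k : ℝ → ℂ) (x : ℝ) :
    ∫ t, zeroExt u (x - t) * zeroExt v t * zeroExt k x =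
      zeroExt (fun y => conv01 u v y * k y) x := by
  by_cases hx : x ∈ Ioo 0 1
  · simp only [zeroExt_apply_of_mem hx, integral_mul_const]
    rw [conv01_eq_integral_zeroExt u v (Ioo_subset_Ioc_self hx)]
  · simp only [zeroExt_apply_of_notMem hx, mul_zero, integral_zero]

section Convolution

variable {u v k : ℝ → ℂ} (hu : Integrable (zeroExt u)) (hv : Integrable (zeroExt v))
  (hk : Continuous k)
include hu hv hk

lemma integrable_zeroExt_conv_kernel :
    Integrable (fun p : ℝ × ℝ => zeroExt u (p.1 - p.2) * zeroExt v p.2 * zeroExt k p.1) := by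
  have h := integrable_zeroExt_mul_zeroExt_mul_comp hu hv hk (L := fun p => p.1 + p.2)
    (by fun_prop)
  have := ((measurePreserving_sub_prod volume volume).integrable_comp h.aestronglyMeasurable).2 h
  rw [Measure.volume_eq_prod]
  simpa only [Function.comp_def, sub_add_cancel] using this

lemma intervalIntegrable_conv01_mul :
    IntervalIntegrable (fun x => conv01 u v x * k x) volume 0 1 := by
  rw [intervalIntegrable_iff_integrable_zeroExt, ← funext (integral_zeroExt_conv_kernel u v k)]
  exact (integrable_zeroExt_conv_kernel hu hv hk).integral_prod_left

lemma integral_conv01_mul :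
    ∫ x in (0:ℝ)..1, conv01 u v x * k x =
      ∫ p : ℝ × ℝ, zeroExt u p.1 * zeroExt v p.2 * zeroExt k (p.1 + p.2) := by
  rw [intervalIntegral_eq_integral_zeroExt, ← funext (integral_zeroExt_conv_kernel u v k),
    ← integral_prod _ (integrable_zeroExt_conv_kernel hu hv hk),
    integral_prod_symm _ (integrable_zeroExt_conv_kernel hu hv hk), Measure.volume_eq_prod,
    integral_prod_symm _
      (integrable_zeroExt_mul_zeroExt_mul_comp hu hv hk (L := fun p => p.1 + p.2) (by fun_prop))]
  refine integral_congr_ae (Filter.Eventually.of_forall fun t => ?_)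
  simpa only [sub_add_cancel] using integral_sub_right_eq_self
    (fun s => zeroExt u s * zeroExt v t * zeroExt k (s + t)) t

end Convolution

lemma intervalIntegrable_conv01 {u v : ℝ → ℂ} (hu : Integrable (zeroExt u))
    (hv : Integrable (zeroExt v)) : IntervalIntegrable (conv01 u v) volume 0 1 := by
  simpa using intervalIntegrable_conv01_mul hu hv (k := fun _ => 1) continuous_const

noncomputable def cosKer (n : ℕ) (x : ℝ) : ℂ := Complex.cos (π * n * x)

lemma cosCoef_eq_intervalIntegral (f : ℝ → ℂ) (n : ℕ) :
    cosCoef f n = ∫ x in (0:ℝ)..1, f x * cosKer n x := rfl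

lemma continuous_cosKer (n : ℕ) : Continuous (cosKer n) := by
  unfold cosKer
  fun_prop

lemma cosKer_neg (n : ℕ) (x : ℝ) : cosKer n (-x) = cosKer n x := by
  simp only [cosKer, Complex.ofReal_neg, mul_neg, Complex.cos_neg]

lemma cosKer_two_sub (n : ℕ) (x : ℝ) : cosKer n (2 - x) = cosKer n x := by
  rw [cosKer, cosKer, ← Complex.cos_nat_mul_two_pi_sub _ n]
  push_cast
  ring_nf

lemma cosKer_add_add_cosKer_sub (n : ℕ) (s t : ℝ) :
    cosKer n (s + t) + cosKer n (s - t) = 2 * cosKer n s * cosKer n t := by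
  simp only [cosKer, Complex.ofReal_add, Complex.ofReal_sub, mul_add, mul_sub,
    Complex.cos_add, Complex.cos_sub]
  ring

lemma cosCoef_const_mul (c : ℂ) (f : ℝ → ℂ) (n : ℕ) :
    cosCoef (fun x => c * f x) n = c * cosCoef f n := by
  simp only [cosCoef_eq_intervalIntegral, mul_assoc, intervalIntegral.integral_const_mul]

lemma cosCoef_add {f g : ℝ → ℂ} (hf : IntervalIntegrable f volume 0 1)
    (hg : IntervalIntegrable g volume 0 1) (n : ℕ) :
    cosCoef (fun x => f x + g x) n = cosCoef f n + cosCoef g n := by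
  have hC := (continuous_cosKer n).continuousOn (s := uIcc 0 1)
  simp only [cosCoef_eq_intervalIntegral, add_mul]
  exact intervalIntegral.integral_add (hf.mul_continuousOn hC) (hg.mul_continuousOn hC)

lemma cosCoef_mul_cosCoef (u v : ℝ → ℂ) (n : ℕ) :
    cosCoef u n * cosCoef v n =
      ∫ p : ℝ × ℝ, zeroExt u p.1 * zeroExt v p.2 * (cosKer n p.1 * cosKer n p.2) := by
  rw [cosCoef_eq_intervalIntegral, cosCoef_eq_intervalIntegral,
    intervalIntegral_eq_integral_zeroExt, intervalIntegral_eq_integral_zeroExt,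
    Measure.volume_eq_prod, ← integral_prod_mul]
  refine integral_congr_ae (Filter.Eventually.of_forall fun p => ?_)
  simp only [zeroExt, indicator_mul_left]
  ring

lemma zeroExt_add_zeroExt_two_sub {k : ℝ → ℂ} (hk : ∀ x, k (2 - x) = k x) {x : ℝ}
    (hx : x ∈ Ioo 0 2) (hx1 : x ≠ 1) : zeroExt k x + zeroExt k (2 - x) = k x := by
  rcases lt_or_gt_of_ne hx1 with h | h
  · rw [zeroExt_apply_of_mem ⟨hx.1, h⟩, zeroExt_apply_of_notMem (fun h' => by linarith [h'.2]),
      add_zero]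
  · rw [zeroExt_apply_of_notMem (fun h' => by linarith [h'.2]),
      zeroExt_apply_of_mem ⟨by linarith [hx.2], by linarith⟩, zero_add, hk]

lemma ae_add_ne_one_and_ne : ∀ᵐ p : ℝ × ℝ, p.1 + p.2 ≠ 1 ∧ p.1 ≠ p.2 := by
  have hmeas : MeasurableSet {p : ℝ × ℝ | p.1 + p.2 ≠ 1 ∧ p.1 ≠ p.2} := by measurability
  rw [Measure.volume_eq_prod]
  refine (Measure.ae_prod_mem_iff_ae_ae_mem hmeas).2 (Filter.Eventually.of_forall fun s => ?_)
  filter_upwards [Measure.ae_ne volume (1 - s), Measure.ae_ne volume s] with t h₁ h₂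
  exact ⟨fun h => h₁ (by linarith), Ne.symm h₂⟩

lemma two_mul_cosKer_mul_cosKer (n : ℕ) {s t : ℝ} (hs : s ∈ Ioo 0 1) (ht : t ∈ Ioo 0 1)
    (hst : s + t ≠ 1) (hst' : s ≠ t) :
    2 * cosKer n s * cosKer n t =
      zeroExt (cosKer n) (s + t) + zeroExt (cosKer n) ((1 - s) + (1 - t))
        + zeroExt (Rref (cosKer n)) ((1 - s) + t)
        + zeroExt (Rref (cosKer n)) (s + (1 - t)) := by
  have hR : ∀ x, Rref (cosKer n) (2 - x) = Rref (cosKer n) x := fun x => by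
    simp only [Rref, ← cosKer_neg n (1 - x)]
    ring_nf
  have h₁ := zeroExt_add_zeroExt_two_sub (cosKer_two_sub n) (x := s + t)
    ⟨by linarith [hs.1, ht.1], by linarith [hs.2, ht.2]⟩ hst
  have h₂ := zeroExt_add_zeroExt_two_sub hR (x := (1 - s) + t)
    ⟨by linarith [hs.2, ht.1], by linarith [hs.1, ht.2]⟩ (fun h => hst' (by linarith))
  rw [show (1 - s) + (1 - t) = 2 - (s + t) by ring, show s + (1 - t) = 2 - ((1 - s) + t) by ring,
    add_assoc, h₂, h₁, ← cosKer_add_add_cosKer_sub, Rref,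
    show 1 - ((1 - s) + t) = s - t by ring]

section CosineCoefficients

variable {u v : ℝ → ℂ} (hu : Integrable (zeroExt u)) (hv : Integrable (zeroExt v)) (n : ℕ)
include hu hv

lemma cosCoef_conv01 :
    cosCoef (conv01 u v) n =
      ∫ p : ℝ × ℝ, zeroExt u p.1 * zeroExt v p.2 * zeroExt (cosKer n) (p.1 + p.2) :=
  integral_conv01_mul hu hv (continuous_cosKer n)

lemma cosCoef_conv01_Rref_Rref :
    cosCoef (conv01 (Rref u) (Rref v)) n =
      ∫ p : ℝ × ℝ,
        zeroExt u p.1 * zeroExt v p.2 * zeroExt (cosKer n) ((1 - p.1) + (1 - p.2)) := by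
  rw [cosCoef_eq_intervalIntegral, integral_conv01_mul (integrable_zeroExt_Rref hu)
    (integrable_zeroExt_Rref hv) (continuous_cosKer n), zeroExt_Rref, zeroExt_Rref,
    ← integral_comp_one_sub_fst, ← integral_comp_one_sub_snd]
  simp only [Rref, sub_sub_cancel]

lemma cosCoef_Rref_conv01_Rref_left :
    cosCoef (Rref (conv01 (Rref u) v)) n =
      ∫ p : ℝ × ℝ,
        zeroExt u p.1 * zeroExt v p.2 * zeroExt (Rref (cosKer n)) ((1 - p.1) + p.2) := by
  rw [cosCoef_eq_intervalIntegral, intervalIntegral_Rref_mul, integral_conv01_mul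
    (integrable_zeroExt_Rref hu) hv (continuous_cosKer n).Rref, zeroExt_Rref,
    ← integral_comp_one_sub_fst]
  simp only [Rref, sub_sub_cancel]

lemma cosCoef_Rref_conv01_Rref_right :
    cosCoef (Rref (conv01 u (Rref v))) n =
      ∫ p : ℝ × ℝ,
        zeroExt u p.1 * zeroExt v p.2 * zeroExt (Rref (cosKer n)) (p.1 + (1 - p.2)) := by
  rw [cosCoef_eq_intervalIntegral, intervalIntegral_Rref_mul, integral_conv01_mul
    hu (integrable_zeroExt_Rref hv) (continuous_cosKer n).Rref, zeroExt_Rref,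
    ← integral_comp_one_sub_snd]
  simp only [Rref, sub_sub_cancel]

lemma two_mul_cosCoef_mul_cosCoef :
    2 * (cosCoef u n * cosCoef v n) =
      (∫ p : ℝ × ℝ, zeroExt u p.1 * zeroExt v p.2 * zeroExt (cosKer n) (p.1 + p.2))
      + (∫ p : ℝ × ℝ,
          zeroExt u p.1 * zeroExt v p.2 * zeroExt (cosKer n) ((1 - p.1) + (1 - p.2)))
      + (∫ p : ℝ × ℝ,
          zeroExt u p.1 * zeroExt v p.2 * zeroExt (Rref (cosKer n)) ((1 - p.1) + p.2))
      + (∫ p : ℝ × ℝ,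
          zeroExt u p.1 * zeroExt v p.2 * zeroExt (Rref (cosKer n)) (p.1 + (1 - p.2))) := by
  have hC := continuous_cosKer n
  rw [← integral_add, ← integral_add, ← integral_add, cosCoef_mul_cosCoef,
    ← integral_const_mul]
  · refine integral_congr_ae ?_
    filter_upwards [ae_add_ne_one_and_ne] with p ⟨hp₁, hp₂⟩
    by_cases hs : p.1 ∈ Ioo 0 1
    · by_cases ht : p.2 ∈ Ioo 0 1
      · rw [zeroExt_apply_of_mem hs, zeroExt_apply_of_mem ht]
        linear_combination (u p.1 * v p.2) * two_mul_cosKer_mul_cosKer n hs ht hp₁ hp₂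
      · simp only [zeroExt_apply_of_notMem ht, mul_zero, zero_mul, add_zero]
    · simp only [zeroExt_apply_of_notMem hs, mul_zero, zero_mul, add_zero]
  all_goals
    repeat' apply Integrable.add
    all_goals refine integrable_zeroExt_mul_zeroExt_mul_comp hu hv ?_ (by fun_prop)
    all_goals first | exact hC | exact hC.Rref

end CosineCoefficients

/-- For `f, g ∈ L²(0,1)`, one has `c_n(f)·c_n(g) = c_n(h₁)` where
`h₁ = ½ { R(Rf∗g + f∗Rg) + f∗g + Rf∗Rg }`. -/
theorem cos_mul_cos_eq_cosCoef
    (f g : ℝ → ℂ) (hf : MemLp f 2 mu01) (hg : MemLp g 2 mu01) (n : ℕ) :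
    cosCoef f n * cosCoef g n =
      cosCoef (fun x =>
        (1/2 : ℂ) * (Rref (fun y => conv01 (Rref f) g y + conv01 f (Rref g) y) x
          + conv01 f g x + conv01 (Rref f) (Rref g) x)) n := by
  have hf₁ := integrable_zeroExt_of_memLp hf
  have hg₁ := integrable_zeroExt_of_memLp hg
  have hRf₁ := integrable_zeroExt_Rref hf₁
  have hRg₁ := integrable_zeroExt_Rref hg₁
  have iA := intervalIntegrable_Rref (intervalIntegrable_conv01 hRf₁ hg₁)
  have iB := intervalIntegrable_Rref (intervalIntegrable_conv01 hf₁ hRg₁)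
  have iP := intervalIntegrable_conv01 hf₁ hg₁
  have iQ := intervalIntegrable_conv01 hRf₁ hRg₁
  simp only [Rref_add]
  rw [cosCoef_const_mul, cosCoef_add ((iA.add iB).add iP) iQ, cosCoef_add (iA.add iB) iP,
    cosCoef_add iA iB, cosCoef_Rref_conv01_Rref_left hf₁ hg₁,
    cosCoef_Rref_conv01_Rref_right hf₁ hg₁, cosCoef_conv01 hf₁ hg₁,
    cosCoef_conv01_Rref_Rref hf₁ hg₁]
  linear_combination (1/2 : ℂ) * two_mul_cosCoef_mul_cosCoef hf₁ hg₁ n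
end

section
/- For f, g in L²(0,1), the n-th sine Fourier coefficients satisfy s_n(f)·s_n(g) = c_n(h₂), where h₂ = (1/2){R(Rf∗g + f∗Rg) − f∗g − Rf∗Rg}. -/
open MeasureTheory Real

/-- `n`-th sine Fourier coefficient `s_n(f) = ∫₀¹ f(x) sin(πnx) dx`. -/
noncomputable def sinCoef (f : ℝ → ℂ) (n : ℕ) : ℂ :=
  ∫ x in (0:ℝ)..1, f x * Complex.sin (Real.pi * n * x)

open Set Function FourierTransform Convolution
open ContinuousLinearMap (mul)

/-!
Extend `f, g` by zero outside `[0, 1]` to `F, G`. On `[0, 1]` each truncated convolution in `h₂`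
is a full-line convolution: `f ∗ g`, `Rf ∗ Rg`, `R(Rf ∗ g)`, `R(f ∗ Rg)` evaluated at `u` are
`(G ⋆ F)(u)`, `(G ⋆ F)(2 - u)`, `(Ǧ ⋆ F)(u)`, `(Ǧ ⋆ F)(-u)` with `Ǧ t = G (-t)`.
As `cos (π n ·)` is even and invariant under `u ↦ 2 - u`, the cosine coefficient of `h₂` folds
into `½ (∫ (Ǧ ⋆ F) cos (π n ·) - ∫ (G ⋆ F) cos (π n ·))` over the whole line. Expressing the
cosine and sine integrals through the Fourier transform at `±n/2`, the convolution theorem and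
`𝓕 Ǧ ξ = 𝓕 G (-ξ)` reduce both sides to the same quadratic form in `𝓕 F (±n/2)`, `𝓕 G (±n/2)`.
-/

theorem integral_mul_cos_eq_fourier {φ : ℝ → ℂ} (hφ : Integrable φ) (ξ : ℝ) :
    ∫ x, φ x * Complex.cos (2 * π * ξ * x) = (𝓕 φ ξ + 𝓕 φ (-ξ)) / 2 := by
  have hpos := (Real.fourierIntegral_convergent_iff (μ := volume) ξ).2 hφ
  have hneg := (Real.fourierIntegral_convergent_iff (μ := volume) (-ξ)).2 hφ
  rw [Real.fourier_eq, Real.fourier_eq, ← integral_add hpos hneg, ← integral_div]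
  congr 1 with x
  have := Complex.two_cos (2 * π * ξ * x)
  simp only [Circle.smul_def, Real.fourierChar_apply, inner_neg_right, neg_neg, smul_eq_mul,
    inner_apply]
  push_cast at this ⊢
  ring_nf at this ⊢
  linear_combination (φ x / 2) * this

theorem integral_mul_sin_eq_fourier {φ : ℝ → ℂ} (hφ : Integrable φ) (ξ : ℝ) :
    ∫ x, φ x * Complex.sin (2 * π * ξ * x) = Complex.I * (𝓕 φ ξ - 𝓕 φ (-ξ)) / 2 := by
  have hpos := (Real.fourierIntegral_convergent_iff (μ := volume) ξ).2 hφ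
  have hneg := (Real.fourierIntegral_convergent_iff (μ := volume) (-ξ)).2 hφ
  rw [Real.fourier_eq, Real.fourier_eq, ← integral_sub hpos hneg, ← integral_const_mul,
    ← integral_div]
  congr 1 with x
  have := Complex.two_sin (2 * π * ξ * x)
  simp only [Circle.smul_def, Real.fourierChar_apply, inner_neg_right, neg_neg, smul_eq_mul,
    inner_apply]
  push_cast at this ⊢
  ring_nf at this ⊢
  linear_combination (φ x / 2) * this

theorem intervalIntegral_eq_integral_of_support_subset_Icc {E : Type*} [NormedAddCommGroup E]
    [NormedSpace ℝ E] {φ : ℝ → E} {a b : ℝ} (hab : a ≤ b) (h : support φ ⊆ Icc a b) :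
    ∫ x in a..b, φ x = ∫ x, φ x := by
  rw [intervalIntegral.integral_of_le hab, ← integral_Icc_eq_integral_Ioc,
    setIntegral_eq_integral_of_forall_compl_eq_zero (support_subset_iff'.1 h)]

section Folding

variable {φ K : ℝ → ℂ}

theorem intervalIntegral_add_comp_sub_mul {c : ℝ} (hφ : Integrable φ) (hK : Continuous K)
    (hKc : ∀ u, K (c - u) = K u) :
    ∫ u in 0..1, (φ u + φ (c - u)) * K u =
      (∫ u in 0..1, φ u * K u) + ∫ u in (c - 1)..c, φ u * K u := by
  simp_rw [add_mul]
  rw [intervalIntegral.integral_add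
    (hφ.intervalIntegrable.mul_continuousOn hK.continuousOn)
    ((hφ.comp_sub_left c).intervalIntegrable.mul_continuousOn hK.continuousOn)]
  have := intervalIntegral.integral_comp_sub_left (fun v => φ v * K (c - v)) c (a := 0) (b := 1)
  simp only [sub_sub_cancel, sub_zero, hKc] at this
  rw [this]

theorem intervalIntegral_add_comp_neg_mul_eq_integral (hφ : Integrable φ) (hK : Continuous K)
    (hK_even : ∀ u, K (-u) = K u) (hφ_supp : support φ ⊆ Icc (-1) 1) :
    ∫ u in 0..1, (φ u + φ (-u)) * K u = ∫ u, φ u * K u := by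
  have hφK (a b : ℝ) : IntervalIntegrable (fun u => φ u * K u) volume a b :=
    hφ.intervalIntegrable.mul_continuousOn hK.continuousOn
  have := intervalIntegral_add_comp_sub_mul (c := 0) hφ hK (by simpa using hK_even)
  simp only [zero_sub] at this
  rw [this, add_comm, intervalIntegral.integral_add_adjacent_intervals (hφK _ _) (hφK _ _),
    intervalIntegral_eq_integral_of_support_subset_Icc (by norm_num)
      ((support_mul_subset_left _ _).trans hφ_supp)]

theorem intervalIntegral_add_comp_two_sub_mul_eq_integral (hφ : Integrable φ) (hK : Continuous K)
    (hK_two : ∀ u, K (2 - u) = K u) (hφ_supp : support φ ⊆ Icc 0 2) :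
    ∫ u in 0..1, (φ u + φ (2 - u)) * K u = ∫ u, φ u * K u := by
  have hφK (a b : ℝ) : IntervalIntegrable (fun u => φ u * K u) volume a b :=
    hφ.intervalIntegrable.mul_continuousOn hK.continuousOn
  rw [intervalIntegral_add_comp_sub_mul hφ hK hK_two, show (2 : ℝ) - 1 = 1 by norm_num,
    intervalIntegral.integral_add_adjacent_intervals (hφK _ _) (hφK _ _),
    intervalIntegral_eq_integral_of_support_subset_Icc (by norm_num)
      ((support_mul_subset_left _ _).trans hφ_supp)]

end Folding

section Convolution

variable {F G : ℝ → ℂ}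

theorem conv01_eq_convolution (hF : support F ⊆ Ici 0) (hG : support G ⊆ Ici 0) {u : ℝ}
    (hu : 0 ≤ u) : conv01 F G u = (G ⋆[mul ℂ ℂ] F) u := by
  rw [conv01, intervalIntegral.integral_of_le hu, ← integral_Icc_eq_integral_Ioc,
    setIntegral_eq_integral_of_forall_compl_eq_zero]
  · simp_rw [mul_comm (F _)]
    rfl
  · intro t ht
    rcases not_and_or.1 ht with ht | ht
    · rw [support_subset_iff'.1 hG t ht, mul_zero]
    · rw [support_subset_iff'.1 hF (u - t) fun h => ht (sub_nonneg.1 h), zero_mul]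

theorem Rref_convolution_Rref_apply (u : ℝ) :
    (Rref G ⋆[mul ℂ ℂ] Rref F) u = (G ⋆[mul ℂ ℂ] F) (2 - u) := by
  show ∫ t, G (1 - t) * F (1 - (u - t)) = ∫ t, G t * F (2 - u - t)
  rw [← integral_sub_left_eq_self _ volume 1]
  congr 1 with t
  ring_nf

theorem convolution_Rref_apply_one_sub (u : ℝ) :
    (G ⋆[mul ℂ ℂ] Rref F) (1 - u) = ((fun t => G (-t)) ⋆[mul ℂ ℂ] F) u := by
  show ∫ t, G t * F (1 - (1 - u - t)) = ∫ t, G (-t) * F (u - t)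
  rw [← integral_neg_eq_self _ volume]
  congr 1 with t
  ring_nf

theorem Rref_convolution_apply_one_sub (u : ℝ) :
    (Rref G ⋆[mul ℂ ℂ] F) (1 - u) = ((fun t => G (-t)) ⋆[mul ℂ ℂ] F) (-u) := by
  show ∫ t, G (1 - t) * F (1 - u - t) = ∫ t, G (-t) * F (-u - t)
  rw [← integral_add_left_eq_self _ 1]
  congr 1 with t
  ring_nf

end Convolution

noncomputable def h₂ (f g : ℝ → ℂ) : ℝ → ℂ := fun x =>
  (1/2 : ℂ) * (Rref (fun y => conv01 (Rref f) g y + conv01 f (Rref g) y) x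
    - conv01 f g x - conv01 (Rref f) (Rref g) x)

theorem cos_pi_nat_mul_two_sub (n : ℕ) (u : ℝ) :
    Complex.cos (π * n * ((2 - u : ℝ) : ℂ)) = Complex.cos (π * n * u) := by
  rw [← Complex.cos_nat_mul_two_pi_sub _ n]
  push_cast
  ring_nf

section SupportedOnUnitInterval

variable {F G : ℝ → ℂ}

theorem support_Rref_subset (hF : support F ⊆ Icc 0 1) : support (Rref F) ⊆ Icc 0 1 :=
  fun x hx => ⟨by linarith [(hF hx).2], by linarith [(hF hx).1]⟩

theorem support_convolution_subset_Icc (hF : support F ⊆ Icc 0 1) (hG : support G ⊆ Icc 0 1) :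
    support (G ⋆[mul ℂ ℂ] F) ⊆ Icc 0 2 := by
  refine (support_convolution_subset _).trans ((add_subset_add hG hF).trans ?_)
  simpa [one_add_one_eq_two] using Icc_add_Icc_subset (0 : ℝ) 1 0 1

theorem support_convolution_comp_neg_subset_Icc (hF : support F ⊆ Icc 0 1)
    (hG : support G ⊆ Icc 0 1) : support ((fun t => G (-t)) ⋆[mul ℂ ℂ] F) ⊆ Icc (-1) 1 := by
  refine (support_convolution_subset _).trans
    ((add_subset_add (t₁ := Icc (-1) 0) ?_ hF).trans ?_)
  · exact fun t ht => ⟨by linarith [(hG ht).2], by linarith [(hG ht).1]⟩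
  · simpa using Icc_add_Icc_subset (-1 : ℝ) 0 0 1

theorem h₂_eq_convolution (hF : support F ⊆ Icc 0 1) (hG : support G ⊆ Icc 0 1) {u : ℝ}
    (hu : u ∈ Icc 0 1) :
    h₂ F G u = (1/2 : ℂ) *
      ((((fun t => G (-t)) ⋆[mul ℂ ℂ] F) u + ((fun t => G (-t)) ⋆[mul ℂ ℂ] F) (-u))
        - ((G ⋆[mul ℂ ℂ] F) u + (G ⋆[mul ℂ ℂ] F) (2 - u))) := by
  have hF₀ := hF.trans Icc_subset_Ici_self
  have hG₀ := hG.trans Icc_subset_Ici_self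
  have hRF₀ := (support_Rref_subset hF).trans Icc_subset_Ici_self
  have hRG₀ := (support_Rref_subset hG).trans Icc_subset_Ici_self
  have hu' : 0 ≤ 1 - u := by linarith [hu.2]
  show (1/2 : ℂ) * (conv01 (Rref F) G (1 - u) + conv01 F (Rref G) (1 - u)
    - conv01 F G u - conv01 (Rref F) (Rref G) u) = _
  rw [conv01_eq_convolution hRF₀ hG₀ hu', conv01_eq_convolution hF₀ hRG₀ hu',
    conv01_eq_convolution hF₀ hG₀ hu.1, conv01_eq_convolution hRF₀ hRG₀ hu.1,
    convolution_Rref_apply_one_sub, Rref_convolution_apply_one_sub, Rref_convolution_Rref_apply]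
  ring

theorem cosCoef_h₂ (hFi : Integrable F) (hGi : Integrable G) (hF : support F ⊆ Icc 0 1)
    (hG : support G ⊆ Icc 0 1) (n : ℕ) :
    cosCoef (h₂ F G) n = (1/2 : ℂ) *
      ((∫ u, ((fun t => G (-t)) ⋆[mul ℂ ℂ] F) u * Complex.cos (π * n * u))
        - ∫ u, (G ⋆[mul ℂ ℂ] F) u * Complex.cos (π * n * u)) := by
  set P := (fun t => G (-t)) ⋆[mul ℂ ℂ] F
  set Q := G ⋆[mul ℂ ℂ] F
  set K : ℝ → ℂ := fun u => Complex.cos (π * n * u)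
  have hK : Continuous K := by fun_prop
  have hP : Integrable P := hGi.comp_neg.integrable_convolution (mul ℂ ℂ) hFi
  have hQ : Integrable Q := hGi.integrable_convolution (mul ℂ ℂ) hFi
  have hPK : IntervalIntegrable (fun u => (P u + P (-u)) * K u) volume 0 1 :=
    (hP.add hP.comp_neg).intervalIntegrable.mul_continuousOn hK.continuousOn
  have hQK : IntervalIntegrable (fun u => (Q u + Q (2 - u)) * K u) volume 0 1 :=
    (hQ.add (hQ.comp_sub_left 2)).intervalIntegrable.mul_continuousOn hK.continuousOn
  have hK_even (u : ℝ) : K (-u) = K u := by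
    simp only [K]
    rw [← Complex.cos_neg]
    push_cast
    ring_nf
  calc cosCoef (h₂ F G) n
      = ∫ u in (0:ℝ)..1, (1/2 : ℂ) * ((P u + P (-u)) * K u - (Q u + Q (2 - u)) * K u) := by
        refine intervalIntegral.integral_congr fun u hu => ?_
        rw [uIcc_of_le zero_le_one] at hu
        simp only [h₂_eq_convolution hF hG hu, K, P, Q]
        ring
    _ = (1/2 : ℂ) * ((∫ u in (0:ℝ)..1, (P u + P (-u)) * K u)
          - ∫ u in (0:ℝ)..1, (Q u + Q (2 - u)) * K u) := by
        rw [intervalIntegral.integral_const_mul, intervalIntegral.integral_sub hPK hQK]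
    _ = _ := by
        rw [intervalIntegral_add_comp_neg_mul_eq_integral hP hK hK_even
            (support_convolution_comp_neg_subset_Icc hF hG),
          intervalIntegral_add_comp_two_sub_mul_eq_integral hQ hK (cos_pi_nat_mul_two_sub n)
            (support_convolution_subset_Icc hF hG)]

theorem sinCoef_eq_integral (hF : support F ⊆ Icc 0 1) (n : ℕ) :
    sinCoef F n = ∫ x, F x * Complex.sin (π * n * x) :=
  intervalIntegral_eq_integral_of_support_subset_Icc zero_le_one
    ((support_mul_subset_left _ _).trans hF)

theorem sinCoef_mul_sinCoef_eq_cosCoef_h₂ (hFi : Integrable F) (hGi : Integrable G)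
    (hF : support F ⊆ Icc 0 1) (hG : support G ⊆ Icc 0 1) (n : ℕ) :
    sinCoef F n * sinCoef G n = cosCoef (h₂ F G) n := by
  have hfreq (x : ℝ) : (π : ℂ) * n * x = 2 * π * ((n / 2 : ℝ) : ℂ) * x := by
    push_cast
    ring
  rw [cosCoef_h₂ hFi hGi hF hG, sinCoef_eq_integral hF, sinCoef_eq_integral hG]
  simp only [hfreq]
  rw [integral_mul_sin_eq_fourier hFi, integral_mul_sin_eq_fourier hGi,
    integral_mul_cos_eq_fourier (hGi.comp_neg.integrable_convolution (mul ℂ ℂ) hFi),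
    integral_mul_cos_eq_fourier (hGi.integrable_convolution (mul ℂ ℂ) hFi)]
  simp only [Real.fourier_mul_convolution_eq hGi.comp_neg hFi,
    Real.fourier_mul_convolution_eq hGi hFi, ← fourierInv_eq_fourier_comp_neg,
    fourierInv_eq_fourier_neg, neg_neg]
  linear_combination ((𝓕 F (n / 2 : ℝ) - 𝓕 F (-(n / 2 : ℝ)))
    * (𝓕 G (n / 2 : ℝ) - 𝓕 G (-(n / 2 : ℝ))) / 4) * Complex.I_sq

end SupportedOnUnitInterval

section Congr

variable {f g F G : ℝ → ℂ}

theorem eqOn_Rref (h : EqOn f F (Icc 0 1)) : EqOn (Rref f) (Rref F) (Icc 0 1) :=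
  fun x hx => h ⟨by linarith [hx.2], by linarith [hx.1]⟩

theorem eqOn_conv01 (hf : EqOn f F (Icc 0 1)) (hg : EqOn g G (Icc 0 1)) :
    EqOn (conv01 f g) (conv01 F G) (Icc 0 1) := fun u hu =>
  intervalIntegral.integral_congr fun t ht => by
    rw [uIcc_of_le hu.1] at ht
    rw [hf ⟨by linarith [ht.2], by linarith [ht.1, hu.2]⟩, hg ⟨ht.1, ht.2.trans hu.2⟩]

theorem eqOn_h₂ (hf : EqOn f F (Icc 0 1)) (hg : EqOn g G (Icc 0 1)) :
    EqOn (h₂ f g) (h₂ F G) (Icc 0 1) := fun u hu => by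
  have hu' : 1 - u ∈ Icc (0 : ℝ) 1 := ⟨by linarith [hu.2], by linarith [hu.1]⟩
  simp only [h₂, Rref]
  rw [eqOn_conv01 (eqOn_Rref hf) hg hu', eqOn_conv01 hf (eqOn_Rref hg) hu',
    eqOn_conv01 hf hg hu, eqOn_conv01 (eqOn_Rref hf) (eqOn_Rref hg) hu]

theorem cosCoef_congr (h : EqOn f F (Icc 0 1)) (n : ℕ) : cosCoef f n = cosCoef F n :=
  intervalIntegral.integral_congr fun x hx => by
    rw [h (by rwa [uIcc_of_le zero_le_one] at hx)]

theorem sinCoef_congr (h : EqOn f F (Icc 0 1)) (n : ℕ) : sinCoef f n = sinCoef F n :=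
  intervalIntegral.integral_congr fun x hx => by
    rw [h (by rwa [uIcc_of_le zero_le_one] at hx)]

end Congr

theorem integrable_indicator_Icc_of_memLp {f : ℝ → ℂ} {p : ENNReal} (hp : 1 ≤ p)
    (hf : MemLp f p mu01) : Integrable ((Icc (0 : ℝ) 1).indicator f) := by
  rw [integrable_indicator_iff measurableSet_Icc, integrableOn_Icc_iff_integrableOn_Ioc]
  exact MemLp.integrable (μ := volume.restrict (Ioc 0 1)) hp hf

/-- For `f, g ∈ L²(0,1)`, one has `s_n(f)·s_n(g) = c_n(h₂)` where
`h₂ = ½ { R(Rf∗g + f∗Rg) − f∗g − Rf∗Rg }`. -/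
theorem sin_mul_sin_eq_cosCoef
    (f g : ℝ → ℂ) (hf : MemLp f 2 mu01) (hg : MemLp g 2 mu01) (n : ℕ) :
    sinCoef f n * sinCoef g n =
      cosCoef (fun x =>
        (1/2 : ℂ) * (Rref (fun y => conv01 (Rref f) g y + conv01 f (Rref g) y) x
          - conv01 f g x - conv01 (Rref f) (Rref g) x)) n := by
  have hfF : EqOn f ((Icc 0 1).indicator f) (Icc 0 1) := fun x hx => (indicator_of_mem hx f).symm
  have hgG : EqOn g ((Icc 0 1).indicator g) (Icc 0 1) := fun x hx => (indicator_of_mem hx g).symm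
  change _ = cosCoef (h₂ f g) n
  rw [sinCoef_congr hfF, sinCoef_congr hgG, cosCoef_congr (eqOn_h₂ hfF hgG)]
  exact sinCoef_mul_sinCoef_eq_cosCoef_h₂ (integrable_indicator_Icc_of_memLp one_le_two hf)
    (integrable_indicator_Icc_of_memLp one_le_two hg) support_indicator_subset
    support_indicator_subset n
end

section
/- For each n ≥ 1, the n-linear map I_n: (L²(0,1))ⁿ → L²(0,1) defined by I_n(f₁,...,f_n)(s) = ∫_{Π*_{n-1}(s)} f₁(s+ξ_{n-1}(y))f₂(y₁)···f_n(y_{n-1}) dy₁⋯dy_{n-1} satisfies ‖I_n(f)‖_{L²} ≤ (1/√((n-1)!))·∏_{l=1}ⁿ ‖f_l‖_{L²}. -/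
open MeasureTheory Real

/-- The alternating sum `ξ_m(y) = Σ_{l=1}^m (−1)^{l+1} y_l` (0-indexed). -/
def xiAlt (m : ℕ) (y : Fin m → ℝ) : ℝ := ∑ i : Fin m, (-1:ℝ)^(i:ℕ) * y i

/-- The region `Π*_m(s) = {y : 0 ≤ y_m ≤ ⋯ ≤ y₁ ≤ s + ξ_m(y) ≤ 1}`. -/
def simplexStar (m : ℕ) (s : ℝ) : Set (Fin m → ℝ) :=
  {y | (∀ i : Fin m, 0 ≤ y i) ∧ (∀ i j : Fin m, i ≤ j → y j ≤ y i) ∧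
       (∀ i : Fin m, y i ≤ s + xiAlt m y) ∧ s + xiAlt m y ≤ 1}

/-- The `(n+1)`-linear map
`I_{n+1}(f)(s) = ∫_{Π*_n(s)} f₁(s+ξ_n(y)) f₂(y₁) ⋯ f_{n+1}(y_n) dy`. -/
noncomputable def Imap (n : ℕ) (f : Fin (n+1) → (ℝ → ℂ)) : ℝ → ℂ :=
  fun s => ∫ y in simplexStar n s,
    f 0 (s + xiAlt n y) * ∏ i : Fin n, f i.succ (y i)

/-!
Dominate `|f_l|` by measurable majorants `G_l`. The region `Π*_n(s)` consists of antitone points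
of `[0,1]ⁿ`, which have volume at most `1/n!`: their `n!` images under permutations of the
coordinates are a.e. disjoint subsets of the cube. Cauchy–Schwarz on `Π*_n(s)` gives
`|I(f)(s)|² ≤ (1/n!) ∫_{Π*_n(s)} G₁(s+ξ(y))² ∏ G_{l+1}(y_l)² dy`, and integrating in `s` with the
substitution `t = s + ξ(y)` (Tonelli, translation invariance) factors the right-hand side as
`(1/n!) ∏ ‖f_l‖₂²`.
-/

open Set
open scoped ENNReal Nat

namespace MeasureTheory

theorem AEStronglyMeasurable.exists_measurable_enorm_le {α ε : Type*} [MeasurableSpace α]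
    {μ : Measure α} [TopologicalSpace ε] [ContinuousENorm ε] {f : α → ε}
    (hf : AEStronglyMeasurable f μ) :
    ∃ G : α → ℝ≥0∞, Measurable G ∧ (∀ x, ‖f x‖ₑ ≤ G x) ∧ G =ᵐ[μ] fun x => ‖f x‖ₑ := by
  classical
  obtain ⟨N, hfN, hN, hN0⟩ := exists_measurable_superset_of_null (ae_iff.1 hf.ae_eq_mk)
  refine ⟨fun x => if x ∈ N then ∞ else ‖hf.mk f x‖ₑ,
    Measurable.ite hN measurable_const hf.stronglyMeasurable_mk.enorm, fun x => ?_, ?_⟩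
  · by_cases hx : x ∈ N
    · simp [hx]
    · simp [hx, not_not.1 (mt (@hfN x) hx)]
  · filter_upwards [measure_eq_zero_iff_ae_notMem.1 hN0, hf.ae_eq_mk] with x hx hfx
    simp [hx, hfx]

theorem eLpNorm_two_sq {α ε : Type*} [MeasurableSpace α] {μ : Measure α} [ENorm ε]
    (f : α → ε) : eLpNorm f 2 μ ^ 2 = ∫⁻ x, ‖f x‖ₑ ^ 2 ∂μ := by
  simpa [ENNReal.rpow_two] using
    eLpNorm_nnreal_pow_eq_lintegral (f := f) (μ := μ) (p := 2) two_ne_zero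

theorem lintegral_sq_le_measure_univ_mul {α : Type*} [MeasurableSpace α] {μ : Measure α}
    {g : α → ℝ≥0∞} (hg : AEMeasurable g μ) :
    (∫⁻ a, g a ∂μ) ^ 2 ≤ μ univ * ∫⁻ a, g a ^ 2 ∂μ := by
  have := ENNReal.lintegral_mul_le_Lp_mul_Lq μ Real.HolderConjugate.two_two hg aemeasurable_const
    (g := 1)
  simp only [Pi.mul_apply, Pi.one_apply, mul_one, ENNReal.one_rpow, lintegral_one] at this
  calc (∫⁻ a, g a ∂μ) ^ 2
      ≤ ((∫⁻ a, g a ^ (2:ℝ) ∂μ) ^ (1/2:ℝ) * μ univ ^ (1/2:ℝ)) ^ 2 := by gcongr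
    _ = μ univ * ∫⁻ a, g a ^ 2 ∂μ := by
      rw [mul_pow, ← ENNReal.rpow_two, ← ENNReal.rpow_two, ← ENNReal.rpow_mul, ← ENNReal.rpow_mul]
      simp [mul_comm]

theorem lintegral_fin_nat_prod_eq_prod {n : ℕ} {E : Type*} [MeasurableSpace E]
    {μ : Fin n → Measure E} [∀ i, SigmaFinite (μ i)] {f : Fin n → E → ℝ≥0∞}
    (hf : ∀ i, Measurable (f i)) :
    ∫⁻ x, ∏ i, f i (x i) ∂(Measure.pi μ) = ∏ i, ∫⁻ x, f i x ∂(μ i) := by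
  induction n with
  | zero => simp
  | succ n ih =>
      calc
        _ = ∫⁻ x : E × (Fin n → E), f 0 x.1 * ∏ i : Fin n, f i.succ (x.2 i)
            ∂((μ 0).prod (Measure.pi fun i ↦ μ i.succ)) := by
          rw [← ((measurePreserving_piFinSuccAbove μ 0).symm).lintegral_comp_emb
            (MeasurableEquiv.measurableEmbedding _)]
          simp_rw [MeasurableEquiv.piFinSuccAbove_symm_apply, Fin.insertNthEquiv,
            Fin.prod_univ_succ, Fin.insertNth_zero, Equiv.coe_fn_mk, Fin.cons_succ,
            Fin.zero_succAbove, cast_eq, Fin.cons_zero]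
        _ = (∫⁻ x, f 0 x ∂μ 0) * ∏ i : Fin n, ∫⁻ x, f i.succ x ∂(μ i.succ) := by
          rw [← ih fun i => hf i.succ]
          exact lintegral_prod_mul (hf 0).aemeasurable (Finset.measurable_prod _
            fun (i : Fin n) _ => (hf i.succ).comp (measurable_pi_apply i)).aemeasurable
        _ = ∏ i, ∫⁻ x, f i x ∂(μ i) := (Fin.prod_univ_succ fun i => ∫⁻ x, f i x ∂(μ i)).symm

theorem lintegral_lintegral_mul_comp_add {G β : Type*} [MeasurableSpace G] [AddGroup G]
    [MeasurableAdd₂ G] {μ : Measure G} [SFinite μ] [μ.IsAddRightInvariant]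
    [MeasurableSpace β] {ν : Measure β} [SFinite ν] {K : β → ℝ≥0∞} {h : G → ℝ≥0∞} {v : β → G}
    (hK : Measurable K) (hh : Measurable h) (hv : Measurable v) :
    ∫⁻ s, ∫⁻ y, K y * h (s + v y) ∂ν ∂μ = (∫⁻ y, K y ∂ν) * ∫⁻ t, h t ∂μ := by
  rw [lintegral_lintegral_swap ((hK.comp measurable_snd).mul
    (hh.comp (measurable_fst.add (hv.comp measurable_snd)))).aemeasurable,
    ← lintegral_mul_const _ hK]
  refine lintegral_congr fun y => ?_
  rw [lintegral_const_mul _ (by fun_prop), lintegral_add_right_eq_self]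

end MeasureTheory

theorem volume_setOf_apply_eq_apply {ι : Type*} [Fintype ι] {i j : ι} (hij : i ≠ j) :
    volume {y : ι → ℝ | y i = y j} = 0 := by
  classical
  let L : (ι → ℝ) →ₗ[ℝ] ℝ := (LinearMap.proj i : (ι → ℝ) →ₗ[ℝ] ℝ) - LinearMap.proj j
  have hL : L ≠ 0 := fun h => by
    simpa [L, Pi.single_apply, hij.symm] using LinearMap.congr_fun h (Pi.single i 1)
  have : {y : ι → ℝ | y i = y j} = LinearMap.ker L := by
    ext y
    simp [L, sub_eq_zero]
  rw [this]
  exact Measure.addHaar_submodule _ _ fun h => hL (LinearMap.ker_eq_top.1 h)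

theorem ae_injective_volume {ι : Type*} [Fintype ι] :
    ∀ᵐ y : ι → ℝ, Function.Injective y := by
  have : {y : ι → ℝ | ¬ Function.Injective y} = ⋃ (i) (j) (_ : i ≠ j), {y | y i = y j} := by
    ext y
    simp [Function.Injective, and_comm]
  rw [ae_iff, this]
  exact measure_iUnion_null fun i => measure_iUnion_null fun j =>
    measure_iUnion_null volume_setOf_apply_eq_apply

theorem aedisjoint_setOf_antitone_comp_perm {n : ℕ} {σ τ : Equiv.Perm (Fin n)} (hστ : σ ≠ τ) :
    AEDisjoint volume {y : Fin n → ℝ | Antitone (y ∘ σ)} {y | Antitone (y ∘ τ)} := by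
  have hnull : volume {y : Fin n → ℝ | ¬ Function.Injective y} = 0 := ae_injective_volume
  refine measure_mono_null (fun y hy (hinj : Function.Injective y) => hστ ?_) hnull
  exact Equiv.coe_fn_injective (hinj.comp_left (Tuple.unique_antitone hy.1 hy.2))

theorem volume_pi_inter_setOf_antitone_le {n : ℕ} {s : Set ℝ} (hs : MeasurableSet s) :
    volume (univ.pi (fun _ : Fin n => s) ∩ {y | Antitone y}) ≤ volume s ^ n / n ! := by
  set A := univ.pi (fun _ : Fin n => s) ∩ {y | Antitone y}
  have hA : MeasurableSet A :=
    (MeasurableSet.univ_pi fun _ => hs).inter isClosed_antitone.measurableSet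
  let S : Equiv.Perm (Fin n) → Set (Fin n → ℝ) := fun σ =>
    univ.pi (fun _ : Fin n => s) ∩ {y | Antitone (y ∘ σ)}
  have hS : ∀ σ, S σ = MeasurableEquiv.piCongrLeft (fun _ => ℝ) σ.symm ⁻¹' A := fun σ => by
    have : ⇑(MeasurableEquiv.piCongrLeft (fun _ => ℝ) σ.symm) = fun y : Fin n → ℝ => y ∘ σ := by
      ext y i
      simp [MeasurableEquiv.piCongrLeft, Equiv.piCongrLeft_apply]
    ext y
    simpa [S, A, this] using fun _ => σ.forall_congr_right.symm
  have hSm : ∀ σ, MeasurableSet (S σ) := fun σ =>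
    hS σ ▸ hA.preimage (MeasurableEquiv.measurable _)
  have hvol : ∀ σ, volume (S σ) = volume A := fun σ => hS σ ▸
    (volume_measurePreserving_piCongrLeft (fun _ => ℝ) σ.symm).measure_preimage
      hA.nullMeasurableSet
  have hdisj : Pairwise (Function.onFun (AEDisjoint volume) S) := fun σ τ hστ =>
    (aedisjoint_setOf_antitone_comp_perm hστ).mono inter_subset_right inter_subset_right
  have : n ! * volume A ≤ volume s ^ n := calc
    n ! * volume A = ∑ σ, volume (S σ) := by simp [hvol, Fintype.card_perm]
    _ = volume (⋃ σ, S σ) := by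
      rw [measure_iUnion₀ hdisj fun σ => (hSm σ).nullMeasurableSet, tsum_fintype]
    _ ≤ volume (univ.pi fun _ : Fin n => s) :=
      measure_mono (iUnion_subset fun σ => inter_subset_left)
    _ = volume s ^ n := by simp [volume_pi_pi]
  rw [ENNReal.le_div_iff_mul_le (by simp [Nat.factorial_ne_zero]) (by simp), mul_comm]
  exact this

theorem measurable_xiAlt (n : ℕ) : Measurable (xiAlt n) := by
  unfold xiAlt
  fun_prop

theorem simplexStar_subset (n : ℕ) (s : ℝ) :
    simplexStar n s ⊆ univ.pi (fun _ => Icc 0 1) ∩ {y | Antitone y} :=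
  fun _ ⟨h0, hanti, hle, h1⟩ => ⟨fun i _ => ⟨h0 i, (hle i).trans h1⟩, hanti⟩

theorem volume_simplexStar_le (n : ℕ) (s : ℝ) : volume (simplexStar n s) ≤ (n ! : ℝ≥0∞)⁻¹ :=
  (measure_mono (simplexStar_subset n s)).trans <| by
    simpa using volume_pi_inter_setOf_antitone_le (n := n) (s := Icc (0 : ℝ) 1) measurableSet_Icc

theorem add_xiAlt_mem_Icc {n : ℕ} {s : ℝ} (hs : 0 ≤ s) {y : Fin n → ℝ}
    (hy : y ∈ simplexStar n s) : s + xiAlt n y ∈ Icc 0 1 := by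
  refine ⟨?_, hy.2.2.2⟩
  cases n with
  | zero => simpa [xiAlt] using hs
  | succ m => exact (hy.1 0).trans (hy.2.2.1 0)

noncomputable def imapIntegrand (n : ℕ) (G : Fin (n + 1) → ℝ → ℝ≥0∞) (s : ℝ)
    (y : Fin n → ℝ) : ℝ≥0∞ :=
  G 0 (s + xiAlt n y) * ∏ i : Fin n, G i.succ (y i)

section imapIntegrand

variable {n : ℕ} {G : Fin (n + 1) → ℝ → ℝ≥0∞}

theorem measurable_imapIntegrand (hG : ∀ l, Measurable (G l)) (s : ℝ) :
    Measurable (imapIntegrand n G s) :=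
  ((hG 0).comp (measurable_const_add s |>.comp (measurable_xiAlt n))).mul
    (Finset.measurable_prod _ fun i _ => (hG i.succ).comp (measurable_pi_apply i))

theorem imapIntegrand_pow (k : ℕ) (s : ℝ) (y : Fin n → ℝ) :
    imapIntegrand n G s y ^ k = imapIntegrand n (fun l t => G l t ^ k) s y := by
  simp [imapIntegrand, mul_pow, Finset.prod_pow]

theorem enorm_Imap_le {f : Fin (n + 1) → ℝ → ℂ} (hfG : ∀ l t, ‖f l t‖ₑ ≤ G l t) (s : ℝ) :
    ‖Imap n f s‖ₑ ≤ ∫⁻ y in simplexStar n s, imapIntegrand n G s y :=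
  (enorm_integral_le_lintegral_enorm _).trans <| lintegral_mono fun y => by
    rw [enorm_mul, enorm_eq_nnnorm (∏ i, _), nnnorm_prod, ENNReal.ofNNReal_finsetProd]
    exact mul_le_mul' (hfG 0 _) (Finset.prod_le_prod' fun i _ => hfG i.succ _)

theorem sq_setLIntegral_imapIntegrand_le (hG : ∀ l, Measurable (G l)) (s : ℝ) :
    (∫⁻ y in simplexStar n s, imapIntegrand n G s y) ^ 2 ≤
      (n ! : ℝ≥0∞)⁻¹ * ∫⁻ y in simplexStar n s, imapIntegrand n (fun l t => G l t ^ 2) s y := by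
  calc _ ≤ volume (simplexStar n s) * ∫⁻ y in simplexStar n s, imapIntegrand n G s y ^ 2 := by
        simpa using lintegral_sq_le_measure_univ_mul (μ := volume.restrict (simplexStar n s))
          (measurable_imapIntegrand hG s).aemeasurable
    _ ≤ _ := by
        simp_rw [imapIntegrand_pow]
        gcongr
        exact volume_simplexStar_le n s

theorem lintegral_setLIntegral_imapIntegrand_le (hG : ∀ l, Measurable (G l)) :
    ∫⁻ s in Icc 0 1, ∫⁻ y in simplexStar n s, imapIntegrand n G s y ≤
      ∏ l, ∫⁻ t in Icc 0 1, G l t := by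
  set K : (Fin n → ℝ) → ℝ≥0∞ := fun y => ∏ i, (Icc 0 1).indicator (G i.succ) (y i)
  have hK : Measurable K := Finset.measurable_prod _ fun i _ =>
    ((hG i.succ).indicator measurableSet_Icc).comp (measurable_pi_apply i)
  have hG0 : Measurable ((Icc 0 1).indicator (G 0)) := (hG 0).indicator measurableSet_Icc
  calc _ ≤ ∫⁻ s in Icc 0 1, ∫⁻ y, K y * (Icc 0 1).indicator (G 0) (s + xiAlt n y) := by
        refine setLIntegral_mono' measurableSet_Icc fun s hs => (setLIntegral_mono
          (hK.mul (hG0.comp (measurable_const_add s |>.comp (measurable_xiAlt n))))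
          fun y hy => le_of_eq ?_).trans (setLIntegral_le_lintegral _ _)
        change _ = K y * (Icc 0 1).indicator (G 0) (s + xiAlt n y)
        rw [indicator_of_mem (add_xiAlt_mem_Icc hs.1 hy), imapIntegrand, mul_comm]
        congr 1
        exact Finset.prod_congr rfl fun i _ =>
          (indicator_of_mem ((simplexStar_subset n s hy).1 i trivial) _).symm
    _ ≤ ∫⁻ s, ∫⁻ y, K y * (Icc 0 1).indicator (G 0) (s + xiAlt n y) :=
        setLIntegral_le_lintegral _ _
    _ = (∫⁻ y, K y) * ∫⁻ t, (Icc 0 1).indicator (G 0) t :=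
        lintegral_lintegral_mul_comp_add hK hG0 (measurable_xiAlt n)
    _ = _ := by
        rw [volume_pi, lintegral_fin_nat_prod_eq_prod fun i =>
          (hG i.succ).indicator measurableSet_Icc, Fin.prod_univ_succ, mul_comm]
        simp [lintegral_indicator measurableSet_Icc]

end imapIntegrand

/-- For each `n ≥ 1` the `n`-linear map `I_n : (L²)ⁿ → L²`
satisfies `‖I_n(f)‖₂ ≤ (1/√(n−1)!) ∏ ‖f_l‖₂` (here stated for `I_{n+1}`, `n ≥ 0`). -/
theorem Imap_l2_bound (n : ℕ) (f : Fin (n+1) → (ℝ → ℂ))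
    (hf : ∀ l, MemLp (f l) 2 mu01) :
    eLpNorm (Imap n f) 2 mu01 ≤
      ENNReal.ofReal (1 / Real.sqrt (Nat.factorial n)) *
        ∏ l, eLpNorm (f l) 2 mu01 := by
  -- `f l` is only a.e. determined but `Imap` evaluates it everywhere, hence everywhere-majorants.
  choose G hGm hfG hGf using fun l => (hf l).aestronglyMeasurable.exists_measurable_enorm_le
  have hmu : mu01 = volume.restrict (Icc 0 1) := Measure.restrict_congr_set Ioc_ae_eq_Icc
  have hnorm : ∀ l, eLpNorm (f l) 2 mu01 ^ 2 = ∫⁻ t in Icc 0 1, G l t ^ 2 := fun l => by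
    rw [eLpNorm_two_sq, ← hmu]
    exact lintegral_congr_ae (by filter_upwards [hGf l] with t ht; rw [ht])
  have hconst : ENNReal.ofReal (1 / √(n ! : ℝ)) ^ 2 = (n ! : ℝ≥0∞)⁻¹ := by
    rw [← ENNReal.ofReal_pow (by positivity), div_pow, Real.sq_sqrt (by positivity), one_pow,
      one_div, ENNReal.ofReal_inv_of_pos (by positivity), ENNReal.ofReal_natCast]
  rw [← ENNReal.pow_le_pow_left_iff two_ne_zero, mul_pow, hconst, ← Finset.prod_pow]
  calc eLpNorm (Imap n f) 2 mu01 ^ 2 = ∫⁻ s in Icc 0 1, ‖Imap n f s‖ₑ ^ 2 := by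
        rw [eLpNorm_two_sq, hmu]
    _ ≤ ∫⁻ s in Icc 0 1, (n ! : ℝ≥0∞)⁻¹ *
          ∫⁻ y in simplexStar n s, imapIntegrand n (fun l t => G l t ^ 2) s y :=
        lintegral_mono fun s => (pow_le_pow_left' (enorm_Imap_le hfG s) 2).trans
          (sq_setLIntegral_imapIntegrand_le hGm s)
    _ ≤ (n ! : ℝ≥0∞)⁻¹ * ∏ l, ∫⁻ t in Icc 0 1, G l t ^ 2 := by
        rw [lintegral_const_mul' _ _ (by simp [Nat.factorial_ne_zero])]
        gcongr
        exact lintegral_setLIntegral_imapIntegrand_le fun l => (hGm l).pow_const 2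
    _ = _ := by simp_rw [hnorm]
end
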